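/- arXiv:2407.14332 — 3 statements merged into one kernel-verified Lean document; each statement's English description precedes it below -/
import Mathlib

section
/- Under the assumptions of the mixture lemma, if additionally ĝ satisfies R̂_B(ĝ) = inf_{g∈G} R̂_B(g) where R̂_B is the pooled empirical risk over N total samples, and sup_{g∈G}|R_B(g) − R̂_B(g)| ≤ ε, then R_{P₀}(ĝ) ≤ inf_{g∈G} R_{P₀}(g) + 2ε + 2ϑ, where ϑ = Σⱼ λⱼ θⱼ is the weighted average type. -/
/-- Deterministic collaborative excess-risk bound for pooled ERM. -/
theorem collaborative_erm_excess_risk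
    {α : Type*} (G : Set α) (J : ℕ)
    (lam : Fin J → ℝ) (hlam : ∀ j, 0 ≤ lam j) (hsum : ∑ j, lam j = 1)
    (R : Fin J → α → ℝ) (R0 : α → ℝ) (θ : Fin J → ℝ)
    (hθ : ∀ j, ∀ g ∈ G, |R j g - R0 g| ≤ θ j)
    (RB : α → ℝ) (hRB : ∀ g, RB g = ∑ j, lam j * R j g)
    (RhatB : α → ℝ) (ε : ℝ)
    (hdev : ∀ g ∈ G, |RB g - RhatB g| ≤ ε)
    (ghat : α) (hghat : ghat ∈ G)
    (hmin : RhatB ghat = sInf (RhatB '' G))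
    (hbdd : BddBelow (R0 '' G)) (hbdd' : BddBelow (RhatB '' G))
    (ϑ : ℝ) (hϑ : ϑ = ∑ j, lam j * θ j) :
    R0 ghat ≤ sInf (R0 '' G) + 2 * ε + 2 * ϑ := by
  have hmix : ∀ g ∈ G, |RB g - R0 g| ≤ ϑ := by
    intro g hg
    have : RB g - R0 g = ∑ j, lam j * (R j g - R0 g) := by
      simp [hRB, mul_sub, Finset.sum_sub_distrib, ← Finset.sum_mul, hsum]
    rw [this, hϑ]
    calc |∑ j, lam j * (R j g - R0 g)| ≤ ∑ j, |lam j * (R j g - R0 g)| :=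
          Finset.abs_sum_le_sum_abs _ _
      _ ≤ ∑ j, lam j * θ j := by
          apply Finset.sum_le_sum
          intro j _
          rw [abs_mul, abs_of_nonneg (hlam j)]
          exact mul_le_mul_of_nonneg_left (hθ j g hg) (hlam j)
  have key : ∀ g ∈ G, R0 ghat ≤ R0 g + 2 * ε + 2 * ϑ := by
    intro g hg
    have h1 := abs_le.1 (hmix ghat hghat)
    have h2 := abs_le.1 (hdev ghat hghat)
    have h3 := abs_le.1 (hmix g hg)
    have h4 := abs_le.1 (hdev g hg)
    have h5 : RhatB ghat ≤ RhatB g := by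
      rw [hmin]; exact csInf_le hbdd' ⟨g, hg, rfl⟩
    linarith [h1.1, h1.2, h2.1, h2.2, h3.1, h3.2, h4.1, h4.2]
  have : R0 ghat - 2 * ε - 2 * ϑ ≤ sInf (R0 '' G) := by
    apply le_csInf ⟨R0 ghat, Set.mem_image_of_mem _ hghat⟩
    rintro b ⟨g, hg, rfl⟩
    linarith [key g hg]
  linarith
end

section
/- Consider J ≥ 2 agents with strictly increasing types θ₁ < … < θ_J. In any pure-strategy Nash equilibrium of the naive direct-revelation game where each contributing agent j's payoff is Oⱼ + 2a[(θⱼ − θ̃ⱼ) − (ϑ − ϑ̃)] (with ϑ and ϑ̃ the contribution-weighted averages of true and declared types among contributors, weights λⱼ > 0 summing to 1), all contributors j, k satisfy θⱼ − θ̃ⱼ = θₖ − θ̃ₖ = ϑ − ϑ̃. -/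
/-- In any pure Nash equilibrium of the naive direct-revelation game, all
contributors' type gaps are equal to the weighted average gap. -/
theorem nash_equal_gaps
    (J : ℕ) (hJ : 2 ≤ J)
    (a : ℝ) (ha : 0 < a)
    (θ θtilde : Fin J → ℝ) (hθ : StrictMono θ)
    (lam : Fin J → ℝ) (hlam : ∀ j, 0 < lam j) (hsum : ∑ j, lam j = 1)
    (O v : Fin J → ℝ)
    (hpayoff : ∀ j, v j
      = O j + 2 * a * ((θ j - θtilde j) - ∑ k, lam k * (θ k - θtilde k)))
    (hnash : ∀ j, O j ≤ v j) :
    ∀ j k : Fin J,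
      θ j - θtilde j = θ k - θtilde k ∧
      θ j - θtilde j = ∑ l, lam l * (θ l - θtilde l) := by
  set g : Fin J → ℝ := fun j => θ j - θtilde j with hg
  set S : ℝ := ∑ l, lam l * g l with hS
  have hge : ∀ j, S ≤ g j := by
    intro j
    have h := hnash j
    rw [hpayoff j] at h
    have hgj : g j = θ j - θtilde j := rfl
    nlinarith [h, hgj]
  have hzero : ∑ l, lam l * (g l - S) = 0 := by
    have : ∑ l, lam l * (g l - S) = S - (∑ l, lam l) * S := by
      simp [mul_sub, Finset.sum_sub_distrib, ← Finset.sum_mul, hS]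
    rw [this, hsum]; ring
  have heq : ∀ j, g j = S := by
    intro j
    have hnn : ∀ l ∈ Finset.univ, 0 ≤ lam l * (g l - S) := fun l _ =>
      mul_nonneg (hlam l).le (by linarith [hge l])
    have := (Finset.sum_eq_zero_iff_of_nonneg hnn).mp hzero j (Finset.mem_univ j)
    have hl := (hlam j).ne'
    have : g j - S = 0 := by
      rcases mul_eq_zero.mp this with h | h
      · exact absurd h hl
      · exact h
    linarith
  intro j k
  exact ⟨(heq j).trans (heq k).symm, heq j⟩
end

section
/- Consider the linear program: minimize λᵀθ over λ in the simplex Δ_J subject to λⱼ·N ≤ cⱼ(λ) for all j, where θ₁ < … < θ_J. At any optimum λ*, if λ*_r > 0 for some r, then for every k < r the constraint binds: λ*_k·N = cₖ(λ*). Consequently there exists an index L such that λ*_k·N = cₖ(λ*) for all k < L, λ*_k = 0 for all k > L, and λ*_L = 1 − Σ_{k<L} λ*_k. -/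
/-- Greedy structure of the optimal sample-sharing: at any optimum of the
weighted-average-type linear program, capacities bind below any positive weight,
and the optimum is a threshold allocation. -/
theorem optimal_sharing_threshold
    (J : ℕ) (hJ : 0 < J)
    (a c α γ n₀ N : ℝ)
    (ha : 0 < a) (hc : 0 < c) (hα : 0 < α) (hγ : 0 < γ)
    (hn₀ : 0 < n₀) (hN : 0 < N)
    (θ : Fin J → ℝ) (hθ : StrictMono θ)
    (C : Fin J → (Fin J → ℝ) → ℝ)
    (hC : ∀ j lam, C j lam
      = n₀ - (2 * a / c) * (α * ((1 + N) ^ (-γ) - (1 + n₀) ^ (-γ))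
          + ((∑ k, lam k * θ k) - θ j)))
    (S : Set (Fin J → ℝ))
    (hS : S = {lam | (∀ j, 0 ≤ lam j) ∧ (∑ j, lam j) = 1 ∧
        ∀ j, lam j * N ≤ C j lam})
    (lamstar : Fin J → ℝ) (hfeas : lamstar ∈ S)
    (hopt : ∀ lam ∈ S, ∑ j, lamstar j * θ j ≤ ∑ j, lam j * θ j) :
    (∀ r : Fin J, 0 < lamstar r →
        ∀ k : Fin J, k < r → lamstar k * N = C k lamstar) ∧
      ∃ L : Fin J,
        (∀ k : Fin J, k < L → lamstar k * N = C k lamstar) ∧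
        (∀ k : Fin J, L < k → lamstar k = 0) ∧
        lamstar L = 1 - ∑ k ∈ Finset.univ.filter (· < L), lamstar k := by
  rw [hS] at hfeas
  obtain ⟨hpos, hsum, hcon⟩ := hfeas
  -- Key claim: capacities bind below any positive weight
  have key : ∀ r : Fin J, 0 < lamstar r →
      ∀ k : Fin J, k < r → lamstar k * N = C k lamstar := by
    intro r hr k hkr
    by_contra hne
    have hkneq : k ≠ r := ne_of_lt hkr
    have hθkr : θ k < θ r := hθ hkr
    have hslack : lamstar k * N < C k lamstar := lt_of_le_of_ne (hcon k) hne
    set s : ℝ := C k lamstar - lamstar k * N with hs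
    have hs0 : 0 < s := by simp [hs]; linarith
    set ε : ℝ := min (lamstar r) (s / N) with hε
    have hε0 : 0 < ε := lt_min hr (div_pos hs0 hN)
    have hεr : ε ≤ lamstar r := min_le_left _ _
    have hεs : ε * N ≤ s := by
      have := min_le_right (lamstar r) (s / N)
      calc ε * N ≤ (s / N) * N := by
            apply mul_le_mul_of_nonneg_right this hN.le
        _ = s := by field_simp
    set lam' : Fin J → ℝ := fun j =>
      lamstar j + (if j = k then ε else 0) - (if j = r then ε else 0) with hlam'
    have hrk : r ≠ k := Ne.symm hkneq
    have hvk : lam' k = lamstar k + ε := by simp [hlam', hkneq]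
    have hvr : lam' r = lamstar r - ε := by simp [hlam', hrk]
    have hvo : ∀ j, j ≠ k → j ≠ r → lam' j = lamstar j := by
      intro j h1 h2; simp [hlam', h1, h2]
    have hsum' : ∀ f : Fin J → ℝ, ∑ j, lam' j * f j
        = (∑ j, lamstar j * f j) + ε * f k - ε * f r := by
      intro f
      have key : ∀ j, lam' j * f j = lamstar j * f j
          + (if j = k then ε * f j else 0) - (if j = r then ε * f j else 0) := by
        intro j
        by_cases h1 : j = k
        · subst h1; simp [hvk, hkneq]; ring
        · by_cases h2 : j = r
          · subst h2; simp [hvr, h1]; ring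
          · simp [hvo j h1 h2, h1, h2]
      simp only [key, Finset.sum_sub_distrib, Finset.sum_add_distrib,
        Finset.sum_ite_eq', Finset.mem_univ, if_true]
    have hsum'' : ∑ j, lam' j = 1 := by
      have key : ∀ j, lam' j = lamstar j
          + (if j = k then ε else 0) - (if j = r then ε else 0) := fun j => rfl
      simp only [key, Finset.sum_sub_distrib, Finset.sum_add_distrib,
        Finset.sum_ite_eq', Finset.mem_univ, if_true, hsum]
      ring
    -- the weighted sum strictly decreases
    have hobj : ∑ j, lam' j * θ j = (∑ j, lamstar j * θ j) + ε * θ k - ε * θ r :=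
      hsum' θ
    have hobjlt : ∑ j, lam' j * θ j < ∑ j, lamstar j * θ j := by
      rw [hobj]; nlinarith
    -- C j lam' = C j lamstar + (2a/c) * ε * (θ r - θ k)
    have hCshift : ∀ j, C j lam' = C j lamstar + (2 * a / c) * (ε * (θ r - θ k)) := by
      intro j
      rw [hC j lam', hC j lamstar, hobj]; ring
    have hKpos : 0 ≤ (2 * a / c) * (ε * (θ r - θ k)) := by
      apply mul_nonneg (by positivity)
      apply mul_nonneg hε0.le (by linarith)
    have hfeas' : lam' ∈ S := by
      rw [hS]
      refine ⟨?_, hsum'', ?_⟩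
      · intro j
        by_cases h1 : j = k
        · rw [h1, hvk]; have := hpos k; linarith
        · by_cases h2 : j = r
          · rw [h2, hvr]; linarith
          · rw [hvo j h1 h2]; exact hpos j
      · intro j
        rw [hCshift j]
        have hconj := hcon j
        by_cases h1 : j = k
        · subst h1
          rw [hvk]
          have heq : (lamstar j + ε) * N = lamstar j * N + ε * N := by ring
          rw [heq]
          linarith [hεs]
        · have hle : lam' j ≤ lamstar j := by
            by_cases h2 : j = r
            · subst h2; rw [hvr]; linarith
            · rw [hvo j h1 h2]
          have hmul : lam' j * N ≤ lamstar j * N :=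
            mul_le_mul_of_nonneg_right hle hN.le
          exact (hmul.trans hconj).trans (le_add_of_nonneg_right hKpos)
    exact absurd (hopt lam' hfeas') (not_le.mpr hobjlt)
  refine ⟨key, ?_⟩
  -- find the largest index with positive weight
  have hne : (Finset.univ.filter (fun j => 0 < lamstar j)).Nonempty := by
    by_contra h
    rw [Finset.not_nonempty_iff_eq_empty, Finset.filter_eq_empty_iff] at h
    have : ∀ j : Fin J, lamstar j = 0 := by
      intro j
      have := h (Finset.mem_univ j)
      have := hpos j
      linarith
    simp [this] at hsum
  obtain ⟨L, hLmem, hLmax⟩ := Finset.exists_max_image _ id hne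
  simp only [Finset.mem_filter, Finset.mem_univ, true_and] at hLmem
  refine ⟨L, fun k hk => key L hLmem k hk, ?_, ?_⟩
  · intro k hk
    by_contra hk0
    have hkpos : 0 < lamstar k := lt_of_le_of_ne (hpos k) (Ne.symm hk0)
    have := hLmax k (by simp [hkpos])
    simp only [id] at this
    exact absurd hk (not_lt.mpr this)
  · have hzero : ∀ k : Fin J, L < k → lamstar k = 0 := by
      intro k hk
      by_contra hk0
      have hkpos : 0 < lamstar k := lt_of_le_of_ne (hpos k) (Ne.symm hk0)
      have := hLmax k (by simp [hkpos])
      simp only [id] at this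
      exact absurd hk (not_lt.mpr this)
    have hsplit := Finset.sum_filter_add_sum_filter_not Finset.univ (· < L) lamstar
    rw [hsum] at hsplit
    have : ∑ j ∈ Finset.univ.filter (fun j => ¬ j < L), lamstar j = lamstar L := by
      apply Finset.sum_eq_single_of_mem
      · simp
      · intro b hb hbL
        simp only [Finset.mem_filter, Finset.mem_univ, true_and, not_lt] at hb
        exact hzero b (lt_of_le_of_ne hb (Ne.symm hbL))
    rw [this] at hsplit
    linarith
end
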